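/- The scalar Riccati ODE P'(t) = -2aP(t) + (b^2/r)P(t)^2 - q on [0,T] with terminal condition P(T) = f, where q, r, f > 0 and b ≠ 0, admits a unique solution P on [0,T], and P(t) > 0 for all t ∈ [0,T]. -/

import Mathlib

open Set Real

/-!
The Riccati field factors as `k (x - x₊) (x - x₋)` with equilibria `x₋ < 0 < x₊`, the roots of
`k x² - 2 a x - q` for `k = b² / r > 0`. The substitution `P = x₋ + 1 / y` linearises the equation
to `y' = k (x₊ - x₋) y - k`, whose solution with `y T = 1 / (f - x₋)` is, for `t ≤ T`, a convex
combination of `1 / (x₊ - x₋)` and `1 / (f - x₋)`. Hence `P t ≥ min f x₊ > 0`. Uniqueness is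
backward Grönwall uniqueness for a locally Lipschitz field.
-/

theorem ODE_solution_unique_of_locallyLipschitz_of_mem_Icc_left
    {E : Type*} [NormedAddCommGroup E] [NormedSpace ℝ E] {F : E → E} (hF : LocallyLipschitz F)
    {P Q : ℝ → E} {a b : ℝ}
    (hP : ∀ t ∈ Icc a b, HasDerivWithinAt P (F (P t)) (Icc a b) t)
    (hQ : ∀ t ∈ Icc a b, HasDerivWithinAt Q (F (Q t)) (Icc a b) t)
    (hb : P b = Q b) : EqOn P Q (Icc a b) := by
  have hPc : ContinuousOn P (Icc a b) := fun t ht ↦ (hP t ht).continuousWithinAt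
  have hQc : ContinuousOn Q (Icc a b) := fun t ht ↦ (hQ t ht).continuousWithinAt
  have hcpt : IsCompact (P '' Icc a b ∪ Q '' Icc a b) :=
    (isCompact_Icc.image_of_continuousOn hPc).union (isCompact_Icc.image_of_continuousOn hQc)
  obtain ⟨K, hK⟩ := hF.locallyLipschitzOn.exists_lipschitzOnWith_of_compact hcpt
  have hleft {R : ℝ → E} (hR : ∀ t ∈ Icc a b, HasDerivWithinAt R (F (R t)) (Icc a b) t) (t : ℝ)
      (ht : t ∈ Ioc a b) : HasDerivWithinAt R (F (R t)) (Iic t) t :=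
    (hR t (Ioc_subset_Icc_self ht)).mono_of_mem_nhdsWithin
      (Filter.mem_of_superset (Icc_mem_nhdsLE ht.1) (Icc_subset_Icc_right ht.2))
  exact ODE_solution_unique_of_mem_Icc_left (fun _ _ ↦ hK) hPc (hleft hP)
    (fun t ht ↦ .inl (mem_image_of_mem P (Ioc_subset_Icc_self ht))) hQc (hleft hQ)
    (fun t ht ↦ .inr (mem_image_of_mem Q (Ioc_subset_Icc_self ht))) hb

theorem HasDerivAt.riccati_add_inv {y : ℝ → ℝ} {k xp xm t : ℝ}
    (hy : HasDerivAt y (k * (xp - xm) * y t - k) t) (hyt : y t ≠ 0) :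
    HasDerivAt (fun s ↦ xm + (y s)⁻¹) (k * (xm + (y t)⁻¹ - xp) * (xm + (y t)⁻¹ - xm)) t := by
  refine ((hy.inv hyt).const_add xm).congr_deriv ?_
  field_simp
  ring

noncomputable def riccatiRecip (k xp xm f T t : ℝ) : ℝ :=
  (1 - exp (k * (xp - xm) * (t - T))) / (xp - xm) + exp (k * (xp - xm) * (t - T)) / (f - xm)

noncomputable def riccatiSolution (k xp xm f T t : ℝ) : ℝ :=
  xm + (riccatiRecip k xp xm f T t)⁻¹

section
variable {k xp xm f T t : ℝ}

theorem hasDerivAt_riccatiRecip (h : xp ≠ xm) :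
    HasDerivAt (riccatiRecip k xp xm f T) (k * (xp - xm) * riccatiRecip k xp xm f T t - k) t := by
  have he : HasDerivAt (fun s ↦ exp (k * (xp - xm) * (s - T)))
      (exp (k * (xp - xm) * (t - T)) * (k * (xp - xm))) t := by
    simpa using (((hasDerivAt_id t).sub_const T).const_mul (k * (xp - xm))).exp
  refine (((he.const_sub 1).div_const (xp - xm)).add (he.div_const (f - xm))).congr_deriv ?_
  rw [riccatiRecip]
  field_simp [sub_ne_zero.2 h]
  ring

theorem riccatiRecip_mem_Ioc (hk : 0 ≤ k) (hxp : xm < xp) (hf : xm < f) (ht : t ≤ T) :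
    riccatiRecip k xp xm f T t ∈ Ioc 0 (min f xp - xm)⁻¹ := by
  set e := exp (k * (xp - xm) * (t - T))
  have he0 : 0 < e := exp_pos _
  have he1 : e ≤ 1 := exp_le_one_iff.2 <|
    mul_nonpos_of_nonneg_of_nonpos (mul_nonneg hk (sub_pos.2 hxp).le) (sub_nonpos.2 ht)
  have hm : 0 < min f xp - xm := sub_pos.2 (lt_min hf hxp)
  have hmf : (f - xm)⁻¹ ≤ (min f xp - xm)⁻¹ := inv_anti₀ hm (by gcongr; exact min_le_left _ _)
  have hmp : (xp - xm)⁻¹ ≤ (min f xp - xm)⁻¹ := inv_anti₀ hm (by gcongr; exact min_le_right _ _)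
  have hpos : 0 < riccatiRecip k xp xm f T t :=
    add_pos_of_nonneg_of_pos (div_nonneg (sub_nonneg.2 he1) (sub_pos.2 hxp).le)
      (div_pos he0 (sub_pos.2 hf))
  refine ⟨hpos, ?_⟩
  calc riccatiRecip k xp xm f T t = (1 - e) * (xp - xm)⁻¹ + e * (f - xm)⁻¹ := by
        simp only [riccatiRecip, div_eq_mul_inv, e]
    _ ≤ (1 - e) * (min f xp - xm)⁻¹ + e * (min f xp - xm)⁻¹ := by gcongr
    _ = (min f xp - xm)⁻¹ := by ring

theorem riccatiSolution_self : riccatiSolution k xp xm f T T = f := by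
  simp [riccatiSolution, riccatiRecip]

theorem min_le_riccatiSolution (hk : 0 ≤ k) (hxp : xm < xp) (hf : xm < f) (ht : t ≤ T) :
    min f xp ≤ riccatiSolution k xp xm f T t := by
  obtain ⟨hpos, hle⟩ := riccatiRecip_mem_Ioc hk hxp hf ht
  have := le_inv_of_le_inv₀ hpos hle
  rw [riccatiSolution]
  linarith

theorem hasDerivAt_riccatiSolution (hk : 0 ≤ k) (hxp : xm < xp) (hf : xm < f) (ht : t ≤ T) :
    HasDerivAt (riccatiSolution k xp xm f T)
      (k * (riccatiSolution k xp xm f T t - xp) * (riccatiSolution k xp xm f T t - xm)) t :=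
  (hasDerivAt_riccatiRecip hxp.ne').riccati_add_inv (riccatiRecip_mem_Ioc hk hxp hf ht).1.ne'

end

theorem riccati_field_eq {a k q s : ℝ} (hk : k ≠ 0) (hs : s ^ 2 = a ^ 2 + k * q) (x : ℝ) :
    -2 * a * x + k * x ^ 2 - q = k * (x - (a + s) / k) * (x - (a - s) / k) := by
  field_simp
  linear_combination hs

theorem riccati_backward_exists_unique_pos_general
    (T a b r q f : ℝ) (hb : b ≠ 0)
    (hq : 0 < q) (hr : 0 < r) (hf : 0 < f) :
    ∃ P : ℝ → ℝ,
      (∀ t ∈ Icc 0 T,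
          HasDerivWithinAt P (-2 * a * P t + (b ^ 2 / r) * (P t) ^ 2 - q) (Icc 0 T) t) ∧
      P T = f ∧
      (∀ t ∈ Icc 0 T, 0 < P t) ∧
      (∀ Q : ℝ → ℝ,
        (∀ t ∈ Icc 0 T,
            HasDerivWithinAt Q (-2 * a * Q t + (b ^ 2 / r) * (Q t) ^ 2 - q) (Icc 0 T) t) →
        Q T = f → EqOn P Q (Icc 0 T)) := by
  set k := b ^ 2 / r
  have hk : 0 < k := by positivity
  have hkq : 0 < k * q := mul_pos hk hq
  set s := √(a ^ 2 + k * q)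
  have hs : s ^ 2 = a ^ 2 + k * q := sq_sqrt (by positivity)
  have has : |a| < s := by
    rw [← sqrt_sq_eq_abs]
    exact sqrt_lt_sqrt (sq_nonneg a) (by linarith)
  have hxm : (a - s) / k < 0 := div_neg_of_neg_of_pos (by linarith [le_abs_self a]) hk
  have hxp : 0 < (a + s) / k := div_pos (by linarith [neg_abs_le a]) hk
  set P := riccatiSolution k ((a + s) / k) ((a - s) / k) f T
  have hP : ∀ t ∈ Icc 0 T,
      HasDerivWithinAt P (-2 * a * P t + k * (P t) ^ 2 - q) (Icc 0 T) t := fun t ht ↦ by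
    rw [riccati_field_eq hk.ne' hs]
    exact (hasDerivAt_riccatiSolution hk.le (by linarith) (by linarith) ht.2).hasDerivWithinAt
  refine ⟨P, hP, riccatiSolution_self, fun t ht ↦ ?_, fun Q hQ hQT ↦ ?_⟩
  · exact (lt_min hf hxp).trans_le (min_le_riccatiSolution hk.le (by linarith) (by linarith) ht.2)
  · have hF : LocallyLipschitz fun x : ℝ ↦ -2 * a * x + k * x ^ 2 - q :=
      ContDiff.locallyLipschitz (𝕂 := ℝ) (by fun_prop)
    exact ODE_solution_unique_of_locallyLipschitz_of_mem_Icc_left hF hP hQ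
      (riccatiSolution_self.trans hQT.symm)

/-- The scalar Riccati ODE `P'(t) = -2aP(t) + (b²/r)P(t)² - q` on `[0,T]` with
terminal condition `P(T) = f`, where `q, r, f > 0` and `b ≠ 0`, admits a unique solution on
`[0,T]`, and this solution is strictly positive on `[0,T]`. -/
theorem riccati_backward_exists_unique_pos
    (T a b r q f : ℝ) (hT : 0 < T) (hb : b ≠ 0)
    (hq : 0 < q) (hr : 0 < r) (hf : 0 < f) :
    ∃ P : ℝ → ℝ,
      (∀ t ∈ Icc 0 T,
          HasDerivWithinAt P (-2 * a * P t + (b ^ 2 / r) * (P t) ^ 2 - q) (Icc 0 T) t) ∧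
      P T = f ∧
      (∀ t ∈ Icc 0 T, 0 < P t) ∧
      (∀ Q : ℝ → ℝ,
        (∀ t ∈ Icc 0 T,
            HasDerivWithinAt Q (-2 * a * Q t + (b ^ 2 / r) * (Q t) ^ 2 - q) (Icc 0 T) t) →
        Q T = f → EqOn P Q (Icc 0 T)) :=
  riccati_backward_exists_unique_pos_general T a b r q f hb hq hr hf
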